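/- arXiv:1605.07421 — 4 statements merged into one kernel-verified Lean document; each statement's English description precedes it below -/
import Mathlib

section
/- Let H be a real Hilbert space, let A, B ⊆ H be nonempty closed convex sets, and let α, β ∈ (0, 1). If x ∈ H is a fixed point of the AAMR operator T_{A,B,α,β}, then A ∩ B ≠ ∅ and P_A(x) is the projection of 0 onto A ∩ B, i.e., P_A(x) ∈ A ∩ B and ‖P_A(x)‖ = inf_{y ∈ A∩B} ‖y‖. -/
/-!
A fixed point `x` of `T_{A,B,α,β}` satisfies `P_B(2β P_A x - x) = P_A x =: p`, so `p ∈ A ∩ B`.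
The variational inequalities of the two projections at `p`, tested against `y ∈ A ∩ B`, add up
to `(2β - 2) ⟪p, y - p⟫ ≤ 0` because `(x - p) + ((2β p - x) - p) = (2β - 2) p`. As `β < 1` this
gives `⟪p, y - p⟫ ≥ 0`, i.e. `‖p‖² ≤ ⟪p, y⟫ ≤ ‖p‖ ‖y‖`.
-/

open RealInnerProductSpace

section

variable {H : Type*} [NormedAddCommGroup H] [InnerProductSpace ℝ H]

theorem real_inner_sub_le_zero_of_forall_norm_sub_le {K : Set H} (hK : Convex ℝ K) {u p : H}
    (hp : p ∈ K) (hmin : ∀ c ∈ K, ‖u - p‖ ≤ ‖u - c‖) {w : H} (hw : w ∈ K) :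
    ⟪u - p, w - p⟫ ≤ 0 := by
  have : Nonempty K := ⟨⟨p, hp⟩⟩
  have hinf : ‖u - p‖ = ⨅ c : K, ‖u - c‖ :=
    le_antisymm (le_ciInf fun c => hmin c c.2)
      (ciInf_le ⟨0, Set.forall_mem_range.2 fun _ => norm_nonneg _⟩ (⟨p, hp⟩ : K))
  exact (norm_eq_iInf_iff_real_inner_le_zero hK hp).1 hinf w hw

theorem norm_le_of_real_inner_sub_nonneg {p y : H} (h : 0 ≤ ⟪p, y - p⟫) : ‖p‖ ≤ ‖y‖ := by
  have hsq : ‖p‖ ^ 2 ≤ ‖p‖ * ‖y‖ := by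
    rw [inner_sub_right, real_inner_self_eq_norm_sq] at h
    linarith [real_inner_le_norm p y]
  nlinarith [norm_nonneg p, norm_nonneg y]

theorem apply_eq_of_aamr_fixedPoint (PA PB : H → H) {α β : ℝ} (hα : α ≠ 0) (hβ : β ≠ 0) {x : H}
    (hx : (1 - α) • x + α • ((2 * β) • PB ((2 * β) • PA x - x) - ((2 * β) • PA x - x)) = x) :
    PB ((2 * β) • PA x - x) = PA x := by
  have hx' : α • ((2 * β) • (PB ((2 * β) • PA x - x) - PA x)) = 0 := by
    rw [← sub_eq_zero.2 hx]
    module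
  simpa [hα, hβ, sub_eq_zero] using hx'

theorem real_inner_nonneg_of_aamr_variational {β : ℝ} (hβ : β < 1) {x p w : H}
    (hA : ⟪x - p, w⟫ ≤ 0) (hB : ⟪((2 * β) • p - x) - p, w⟫ ≤ 0) : 0 ≤ ⟪p, w⟫ := by
  have hsum : (x - p) + (((2 * β) • p - x) - p) = (2 * β - 2) • p := by module
  have h : (2 * β - 2) * ⟪p, w⟫ ≤ 0 := by
    rw [← real_inner_smul_left, ← hsum, inner_add_left]
    exact add_nonpos hA hB
  nlinarith

end

theorem stmt_4_general {H : Type*} [NormedAddCommGroup H] [InnerProductSpace ℝ H]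
    (A B : Set H) (hAv : Convex ℝ A) (hBv : Convex ℝ B)
    (PA PB : H → H)
    (hPA : ∀ x, PA x ∈ A ∧ ∀ c ∈ A, ‖x - PA x‖ ≤ ‖x - c‖)
    (hPB : ∀ x, PB x ∈ B ∧ ∀ c ∈ B, ‖x - PB x‖ ≤ ‖x - c‖)
    (α β : ℝ) (hα : α ∈ Set.Ioo (0 : ℝ) 1) (hβ : β ∈ Set.Ioo (0 : ℝ) 1)
    (T : H → H)
    (hT : ∀ x, T x =
      (1 - α) • x + α • ((2 * β) • PB ((2 * β) • PA x - x) - ((2 * β) • PA x - x)))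
    (x : H) (hx : T x = x) :
    (A ∩ B).Nonempty ∧ PA x ∈ A ∩ B ∧ ∀ y ∈ A ∩ B, ‖PA x‖ ≤ ‖y‖ := by
  have hfix : PB ((2 * β) • PA x - x) = PA x :=
    apply_eq_of_aamr_fixedPoint PA PB hα.1.ne' hβ.1.ne' (hT x ▸ hx)
  obtain ⟨hPAx, hminA⟩ := hPA x
  obtain ⟨hPBz, hminB⟩ := hPB ((2 * β) • PA x - x)
  rw [hfix] at hPBz hminB
  have hmem : PA x ∈ A ∩ B := ⟨hPAx, hPBz⟩
  refine ⟨⟨PA x, hmem⟩, hmem, fun y hy => norm_le_of_real_inner_sub_nonneg ?_⟩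
  exact real_inner_nonneg_of_aamr_variational hβ.2
    (real_inner_sub_le_zero_of_forall_norm_sub_le hAv hPAx hminA hy.1)
    (real_inner_sub_le_zero_of_forall_norm_sub_le hBv hPBz hminB hy.2)

/-- If `x` is a fixed point of the AAMR operator `T_{A,B,α,β}`, then
`A ∩ B ≠ ∅` and `P_A(x)` is the projection of `0` onto `A ∩ B`. -/
theorem stmt_4 {H : Type*} [NormedAddCommGroup H] [InnerProductSpace ℝ H] [CompleteSpace H]
    (A B : Set H) (hAne : A.Nonempty) (hAc : IsClosed A) (hAv : Convex ℝ A)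
    (hBne : B.Nonempty) (hBc : IsClosed B) (hBv : Convex ℝ B)
    (PA PB : H → H)
    (hPA : ∀ x, PA x ∈ A ∧ ∀ c ∈ A, ‖x - PA x‖ ≤ ‖x - c‖)
    (hPB : ∀ x, PB x ∈ B ∧ ∀ c ∈ B, ‖x - PB x‖ ≤ ‖x - c‖)
    (α β : ℝ) (hα : α ∈ Set.Ioo (0 : ℝ) 1) (hβ : β ∈ Set.Ioo (0 : ℝ) 1)
    (T : H → H)
    (hT : ∀ x, T x =
      (1 - α) • x + α • ((2 * β) • PB ((2 * β) • PA x - x) - ((2 * β) • PA x - x)))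
    (x : H) (hx : T x = x) :
    (A ∩ B).Nonempty ∧ PA x ∈ A ∩ B ∧ ∀ y ∈ A ∩ B, ‖PA x‖ ≤ ‖y‖ :=
  stmt_4_general A B hAv hBv PA PB hPA hPB α β hα hβ T hT x hx
end

section
/- Let H be a real Hilbert space and let A, B ⊆ H be closed affine subspaces with A ∩ B ≠ ∅. Let y ∈ A ∩ B and let α, β ∈ (0, 1). Then for every x ∈ H, T_{A,B,α,β}(x) = T_{A−y,B−y,α,β}(x) + T_{A,B,α,β}(0). -/
open RealInnerProductSpace Pointwise

/-!
Since `y` lies in both affine subspaces, `A - {y}` and `B - {y}` are the closed subspaces `MA`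
and `MB`, and by uniqueness of nearest points `P_A x = y + P_{MA} (x - y)` and likewise for `B`,
while `P_{A-y}`, `P_{B-y}` are the linear projections `P_{MA}`, `P_{MB}`. Hence `T_{A,B}` is the
affine map with linear part `T_{A-y,B-y}`, and an affine map is its linear part plus its value
at `0`.
-/

lemma singleton_add_sub_singleton_of_mem {G S : Type*} [AddCommGroup G] [SetLike S G]
    [AddSubgroupClass S G] (M : S) {a y : G} (hy : y ∈ {a} + (M : Set G)) :
    {a} + (M : Set G) - {y} = M := by
  ext z
  simp only [Set.singleton_add, Set.sub_singleton, Set.mem_image, SetLike.mem_coe] at hy ⊢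
  obtain ⟨m, hm, rfl⟩ := hy
  constructor
  · rintro ⟨_, ⟨n, hn, rfl⟩, rfl⟩
    simpa [add_sub_add_left_eq_sub] using sub_mem hn hm
  · intro hz
    exact ⟨a + (z + m), ⟨z + m, add_mem hz hm, rfl⟩, by abel⟩

namespace Submodule

variable {H : Type*} [NormedAddCommGroup H] [InnerProductSpace ℝ H]
  (K : Submodule ℝ H) [K.HasOrthogonalProjection]

lemma starProjection_eq_of_forall_norm_sub_le {x p : H} (hp : p ∈ K)
    (hmin : ∀ c ∈ K, ‖x - p‖ ≤ ‖x - c‖) : K.starProjection x = p := by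
  refine eq_starProjection_of_mem_of_inner_eq_zero hp
    ((norm_eq_iInf_iff_real_inner_eq_zero K hp).mp ?_)
  refine le_antisymm (le_ciInf fun c => hmin c c.2) (ciInf_le ⟨0, ?_⟩ (⟨p, hp⟩ : K))
  rintro r ⟨c, rfl⟩
  exact norm_nonneg _

lemma starProjection_sub_add_eq_of_forall_norm_sub_le {C : Set H} {y : H}
    (hC : C - {y} = K) {x p : H} (hp : p ∈ C) (hmin : ∀ c ∈ C, ‖x - p‖ ≤ ‖x - c‖) :
    K.starProjection (x - y) + y = p := by
  have mem_iff (z : H) : z ∈ K ↔ z + y ∈ C := by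
    simp [← SetLike.mem_coe, ← hC, Set.sub_singleton, sub_eq_iff_eq_add]
  have hpK : p - y ∈ K := (mem_iff _).mpr (by simpa using hp)
  refine eq_sub_iff_add_eq.mp (K.starProjection_eq_of_forall_norm_sub_le hpK fun c hc => ?_)
  simpa [sub_sub_sub_cancel_right, sub_sub, add_comm] using hmin (c + y) ((mem_iff c).mp hc)

end Submodule

/-- The AAMR operator `(1 - α) I + α (2β P_B - I) (2β P_A - I)`. -/
def aamr {R E : Type*} [Ring R] [AddCommGroup E] [Module R E]
    (PA PB : E → E) (α β : R) (x : E) : E :=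
  (1 - α) • x + α • ((2 * β) • PB ((2 * β) • PA x - x) - ((2 * β) • PA x - x))

lemma aamr_affine_eq_add_aamr_zero {R E F : Type*} [CommRing R] [AddCommGroup E] [Module R E]
    [FunLike F E E] [LinearMapClass F R E E] (f g : F) (y : E) (α β : R) (x : E) :
    aamr (fun x => f (x - y) + y) (fun x => g (x - y) + y) α β x =
      aamr f g α β x + aamr (fun x => f (x - y) + y) (fun x => g (x - y) + y) α β 0 := by
  simp only [aamr, zero_sub, sub_zero, smul_zero, map_sub, map_add, map_smul, map_neg, smul_sub,
    smul_add, smul_neg]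
  module

theorem stmt_12_general {H : Type*} [NormedAddCommGroup H] [InnerProductSpace ℝ H] [CompleteSpace H]
    (A B : Set H)
    (MA MB : Submodule ℝ H) (hMA : IsClosed (MA : Set H)) (hMB : IsClosed (MB : Set H))
    (a b : H) (hA : A = {a} + (MA : Set H)) (hB : B = {b} + (MB : Set H))
    (y : H) (hy : y ∈ A ∩ B)
    (α β : ℝ)
    (PA PB PAy PBy : H → H)
    (hPA : ∀ x, PA x ∈ A ∧ ∀ c ∈ A, ‖x - PA x‖ ≤ ‖x - c‖)
    (hPB : ∀ x, PB x ∈ B ∧ ∀ c ∈ B, ‖x - PB x‖ ≤ ‖x - c‖)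
    (hPAy : ∀ x, PAy x ∈ A - {y} ∧ ∀ c ∈ A - {y}, ‖x - PAy x‖ ≤ ‖x - c‖)
    (hPBy : ∀ x, PBy x ∈ B - {y} ∧ ∀ c ∈ B - {y}, ‖x - PBy x‖ ≤ ‖x - c‖)
    (T Ty : H → H)
    (hT : ∀ x, T x =
      (1 - α) • x + α • ((2 * β) • PB ((2 * β) • PA x - x) - ((2 * β) • PA x - x)))
    (hTy : ∀ x, Ty x =
      (1 - α) • x + α • ((2 * β) • PBy ((2 * β) • PAy x - x) - ((2 * β) • PAy x - x))) :
    ∀ x, T x = Ty x + T 0 := by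
  have : CompleteSpace MA := hMA.completeSpace_coe
  have : CompleteSpace MB := hMB.completeSpace_coe
  have hAy : A - {y} = MA := hA ▸ singleton_add_sub_singleton_of_mem MA (hA ▸ hy.1)
  have hBy : B - {y} = MB := hB ▸ singleton_add_sub_singleton_of_mem MB (hB ▸ hy.2)
  have hPA' (x : H) : PA x = MA.starProjection (x - y) + y :=
    (MA.starProjection_sub_add_eq_of_forall_norm_sub_le hAy (hPA x).1 (hPA x).2).symm
  have hPB' (x : H) : PB x = MB.starProjection (x - y) + y :=
    (MB.starProjection_sub_add_eq_of_forall_norm_sub_le hBy (hPB x).1 (hPB x).2).symm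
  have hPAy' (x : H) : PAy x = MA.starProjection x := by
    obtain ⟨hmem, hmin⟩ := hPAy x
    rw [hAy] at hmem hmin
    exact (MA.starProjection_eq_of_forall_norm_sub_le hmem hmin).symm
  have hPBy' (x : H) : PBy x = MB.starProjection x := by
    obtain ⟨hmem, hmin⟩ := hPBy x
    rw [hBy] at hmem hmin
    exact (MB.starProjection_eq_of_forall_norm_sub_le hmem hmin).symm
  have hT' (x : H) : T x = aamr (fun x => MA.starProjection (x - y) + y)
      (fun x => MB.starProjection (x - y) + y) α β x := by
    simp only [hT, aamr, hPA', hPB']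
  intro x
  rw [hT', hT', hTy, aamr_affine_eq_add_aamr_zero]
  simp only [aamr, hPAy', hPBy']

/-- For closed affine subspaces `A, B` with `y ∈ A ∩ B` and
`α, β ∈ (0,1)`, one has `T_{A,B,α,β}(x) = T_{A−y,B−y,α,β}(x) + T_{A,B,α,β}(0)` for all `x`. -/
theorem stmt_12 {H : Type*} [NormedAddCommGroup H] [InnerProductSpace ℝ H] [CompleteSpace H]
    (A B : Set H)
    (MA MB : Submodule ℝ H) (hMA : IsClosed (MA : Set H)) (hMB : IsClosed (MB : Set H))
    (a b : H) (hA : A = {a} + (MA : Set H)) (hB : B = {b} + (MB : Set H))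
    (y : H) (hy : y ∈ A ∩ B)
    (α β : ℝ) (hα : α ∈ Set.Ioo (0 : ℝ) 1) (hβ : β ∈ Set.Ioo (0 : ℝ) 1)
    (PA PB PAy PBy : H → H)
    (hPA : ∀ x, PA x ∈ A ∧ ∀ c ∈ A, ‖x - PA x‖ ≤ ‖x - c‖)
    (hPB : ∀ x, PB x ∈ B ∧ ∀ c ∈ B, ‖x - PB x‖ ≤ ‖x - c‖)
    (hPAy : ∀ x, PAy x ∈ A - {y} ∧ ∀ c ∈ A - {y}, ‖x - PAy x‖ ≤ ‖x - c‖)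
    (hPBy : ∀ x, PBy x ∈ B - {y} ∧ ∀ c ∈ B - {y}, ‖x - PBy x‖ ≤ ‖x - c‖)
    (T Ty : H → H)
    (hT : ∀ x, T x =
      (1 - α) • x + α • ((2 * β) • PB ((2 * β) • PA x - x) - ((2 * β) • PA x - x)))
    (hTy : ∀ x, Ty x =
      (1 - α) • x + α • ((2 * β) • PBy ((2 * β) • PAy x - x) - ((2 * β) • PAy x - x))) :
    ∀ x, T x = Ty x + T 0 :=
  stmt_12_general A B MA MB hMA hMB a b hA hB y hy α β PA PB PAy PBy hPA hPB hPAy hPBy T Ty hT hTy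
end

section
/- Let H be a real Hilbert space, let A, B ⊆ H be nonempty closed convex sets with A ∩ B ≠ ∅, let α, β ∈ (0, 1), and let q ∈ H satisfy q − P_{A∩B}(q) ∈ N_A(P_{A∩B}(q)) + N_B(P_{A∩B}(q)). Given any x₀ ∈ H, define x_{n+1} = T_{A−q,B−q,α,β}(x_n) for n ≥ 0. Then: (i) the sequence (x_n) converges weakly (i.e., ⟨x_n, y⟩ → ⟨x*, y⟩ for every y ∈ H) to a fixed point x* of T_{A−q,B−q,α,β} satisfying P_A(q + x*) = P_{A∩B}(q); (ii) x_{n+1} − x_n converges strongly (in norm) to 0; and (iii) the shadow sequence (P_A(q + x_n)) converges strongly (in norm) to P_{A∩B}(q). -/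
/-!
Write `T = (1 - α) I + α N` with `N = R_B ∘ R_A`, where `R = 2βP - I` is a relaxed reflection.
Firm nonexpansiveness of projections gives
`‖N x - N y‖² ≤ ‖x - y‖² - 4β(1 - β) ‖P_A x - P_A y‖²`, so `T` is nonexpansive. After translating
by `-q`, the constraint qualification reads `-s = u + v` with `s = p - q`, `u ∈ N_{A-q}(s)` and
`v ∈ N_{B-q}(s)`, and it produces the explicit fixed point `s + (2 - 2β) u`, whose shadow on
`A - q` is `s`. The Fejér inequality relative to this fixed point telescopes: the increments and
the shadow errors are square-summable, and evaluated at another fixed point it forces the same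
shadow. Weak convergence is Opial's argument: the iterates are bounded, their weak cluster points
are fixed points by demiclosedness, and `‖x n - z‖` converges for every fixed point `z`.
-/
open RealInnerProductSpace Pointwise Filter

/-- The normal cone to a convex set `C` at `x` (empty when `x ∉ C`). -/
def normalCone {H : Type*} [NormedAddCommGroup H] [InnerProductSpace ℝ H]
    (C : Set H) (x : H) : Set H :=
  {u | x ∈ C ∧ ∀ c ∈ C, ⟪u, c - x⟫ ≤ 0}

open Topology Function

section Projection

variable {H : Type*} [NormedAddCommGroup H] [InnerProductSpace ℝ H]

def IsMetricProjection (C : Set H) (P : H → H) : Prop :=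
  ∀ x, P x ∈ C ∧ ∀ c ∈ C, ‖x - P x‖ ≤ ‖x - c‖

theorem eq_of_forall_inner_sub_le_zero {C : Set H} {x u v : H} (hu : u ∈ C) (hv : v ∈ C)
    (hu' : ∀ c ∈ C, ⟪x - u, c - u⟫ ≤ 0) (hv' : ∀ c ∈ C, ⟪x - v, c - v⟫ ≤ 0) : u = v := by
  have h : ⟪u - v, u - v⟫ = ⟪x - u, v - u⟫ + ⟪x - v, u - v⟫ := by
    simp only [inner_sub_left, inner_sub_right, real_inner_comm]
    ring
  have := hu' v hv
  have := hv' u hu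
  exact sub_eq_zero.1 (real_inner_self_nonpos.1 (by linarith))

namespace IsMetricProjection

variable {C : Set H} {P : H → H}

theorem inner_sub_le_zero (hP : IsMetricProjection C P) (hC : Convex ℝ C) (x : H) {c : H}
    (hc : c ∈ C) : ⟪x - P x, c - P x⟫ ≤ 0 := by
  have : Nonempty C := ⟨⟨c, hc⟩⟩
  refine (norm_eq_iInf_iff_real_inner_le_zero hC (hP x).1).1 ?_ c hc
  exact le_antisymm (le_ciInf fun w => (hP x).2 w w.2)
    (ciInf_le ⟨0, by rintro _ ⟨w, rfl⟩; positivity⟩ (⟨P x, (hP x).1⟩ : C))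

theorem apply_eq (hP : IsMetricProjection C P) (hC : Convex ℝ C) {x u : H} (hu : u ∈ C)
    (h : ∀ c ∈ C, ⟪x - u, c - u⟫ ≤ 0) : P x = u :=
  eq_of_forall_inner_sub_le_zero (hP x).1 hu (fun _ => hP.inner_sub_le_zero hC x) h

theorem norm_sub_sq_le_inner (hP : IsMetricProjection C P) (hC : Convex ℝ C) (x y : H) :
    ‖P x - P y‖ ^ 2 ≤ ⟪x - y, P x - P y⟫ := by
  have hx := hP.inner_sub_le_zero hC x (hP y).1
  have hy := hP.inner_sub_le_zero hC y (hP x).1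
  have h : ⟪x - y, P x - P y⟫
      = ‖P x - P y‖ ^ 2 - ⟪x - P x, P y - P x⟫ - ⟪y - P y, P x - P y⟫ := by
    rw [← real_inner_self_eq_norm_sq]
    simp only [inner_sub_left, inner_sub_right, real_inner_comm]
    ring
  linarith

theorem apply_add_eq (hP : IsMetricProjection C P) {q : H} {Pq : H → H}
    (hPq : IsMetricProjection (C - {q}) Pq) (hC : Convex ℝ C) (w : H) :
    P (q + w) = q + Pq w := by
  obtain ⟨c, hc, hcw⟩ : ∃ c ∈ C, c - q = Pq w := by simpa [Set.sub_singleton] using (hPq w).1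
  refine hP.apply_eq hC (by rwa [← hcw, add_sub_cancel]) fun c' hc' => ?_
  have := hPq.inner_sub_le_zero (hC.sub (convex_singleton q)) w (Set.sub_mem_sub hc' rfl)
  convert this using 2 <;> abel

end IsMetricProjection

theorem normalCone_sub_singleton (C : Set H) (x q : H) :
    normalCone (C - {q}) (x - q) = normalCone C x := by
  ext u
  simp [normalCone, Set.sub_singleton]

end Projection

section Averaged

variable {H : Type*} [NormedAddCommGroup H] [InnerProductSpace ℝ H] {α : ℝ} {N : H → H}

def averagedMap (α : ℝ) (N : H → H) (x : H) : H := (1 - α) • x + α • N x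

theorem averagedMap_sub_self (x : H) : averagedMap α N x - x = α • (N x - x) := by
  unfold averagedMap; module

theorem isFixedPt_averagedMap_iff (hα : α ≠ 0) {x : H} :
    IsFixedPt (averagedMap α N) x ↔ IsFixedPt N x := by
  rw [IsFixedPt, IsFixedPt, ← sub_eq_zero, averagedMap_sub_self, smul_eq_zero, sub_eq_zero]
  simp [hα]

theorem Function.IsFixedPt.averagedMap {x : H} (hx : IsFixedPt N x) :
    IsFixedPt (averagedMap α N) x := by
  rw [IsFixedPt, _root_.averagedMap, hx.eq]; module

theorem norm_averagedMap_sub_sq (x y : H) :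
    ‖averagedMap α N x - averagedMap α N y‖ ^ 2 + α * (1 - α) * ‖(N x - x) - (N y - y)‖ ^ 2
      = (1 - α) * ‖x - y‖ ^ 2 + α * ‖N x - N y‖ ^ 2 := by
  have hT : averagedMap α N x - averagedMap α N y = (1 - α) • (x - y) + α • (N x - N y) := by
    unfold averagedMap; module
  have hd : (N x - x) - (N y - y) = (N x - N y) - (x - y) := by abel
  rw [hT, hd]
  generalize x - y = a, N x - N y = b
  simp only [← real_inner_self_eq_norm_sq, inner_add_left, inner_add_right, inner_sub_left,
    inner_sub_right, real_inner_smul_left, real_inner_smul_right, real_inner_comm a b]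
  ring

theorem lipschitzWith_one_of_norm_sub_sq_le {E : Type*} [SeminormedAddCommGroup E] {f : E → E}
    (h : ∀ x y, ‖f x - f y‖ ^ 2 ≤ ‖x - y‖ ^ 2) :
    LipschitzWith 1 f :=
  LipschitzWith.mk_one fun x y => by
    simpa only [dist_eq_norm] using (sq_le_sq₀ (norm_nonneg _) (norm_nonneg _)).1 (h x y)

theorem LipschitzWith.averagedMap (hN : LipschitzWith 1 N) (hα0 : 0 ≤ α) (hα1 : α ≤ 1) :
    LipschitzWith 1 (averagedMap α N) := by
  refine lipschitzWith_one_of_norm_sub_sq_le fun x y => ?_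
  have hNxy : ‖N x - N y‖ ≤ ‖x - y‖ := by simpa using hN.norm_sub_le x y
  have := norm_averagedMap_sub_sq (α := α) (N := N) x y
  nlinarith [mul_nonneg hα0 (sub_nonneg.2 hα1), sq_nonneg ‖(N x - x) - (N y - y)‖,
    pow_le_pow_left₀ (norm_nonneg _) hNxy 2]

theorem norm_averagedMap_sub_sq_add {f : H} (hf : IsFixedPt N f) (x : H) :
    ‖averagedMap α N x - f‖ ^ 2 + (1 - α) / α * ‖averagedMap α N x - x‖ ^ 2
      = (1 - α) * ‖x - f‖ ^ 2 + α * ‖N x - f‖ ^ 2 := by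
  have h := norm_averagedMap_sub_sq (α := α) (N := N) x f
  rw [hf.averagedMap, hf, sub_self, sub_zero] at h
  rw [← h, averagedMap_sub_self, norm_smul, mul_pow, Real.norm_eq_abs, sq_abs]
  field_simp

end Averaged

section AAMR

variable {H : Type*} [NormedAddCommGroup H] [InnerProductSpace ℝ H] {α β : ℝ}

def relaxedReflection (β : ℝ) (P : H → H) (x : H) : H := (2 * β) • P x - x

def aamrOperator (α β : ℝ) (PA PB : H → H) : H → H :=
  averagedMap α (relaxedReflection β PB ∘ relaxedReflection β PA)

variable {C D : Set H} {PC PD : H → H}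

theorem IsMetricProjection.norm_relaxedReflection_sub_sq_le (hP : IsMetricProjection C PC)
    (hC : Convex ℝ C) (hβ : 0 ≤ β) (x y : H) :
    ‖relaxedReflection β PC x - relaxedReflection β PC y‖ ^ 2
      ≤ ‖x - y‖ ^ 2 - 4 * β * (1 - β) * ‖PC x - PC y‖ ^ 2 := by
  have hfirm := hP.norm_sub_sq_le_inner hC x y
  have h : relaxedReflection β PC x - relaxedReflection β PC y
      = (2 * β) • (PC x - PC y) - (x - y) := by
    unfold relaxedReflection; module
  rw [h, norm_sub_sq_real, norm_smul, real_inner_smul_left, real_inner_comm, Real.norm_eq_abs,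
    abs_of_nonneg (by positivity)]
  nlinarith

theorem norm_relaxedReflection_comp_sub_sq_le (hPC : IsMetricProjection C PC) (hC : Convex ℝ C)
    (hPD : IsMetricProjection D PD) (hD : Convex ℝ D) (hβ0 : 0 ≤ β) (hβ1 : β ≤ 1) (x y : H) :
    ‖relaxedReflection β PD (relaxedReflection β PC x)
        - relaxedReflection β PD (relaxedReflection β PC y)‖ ^ 2
      ≤ ‖x - y‖ ^ 2 - 4 * β * (1 - β) * ‖PC x - PC y‖ ^ 2 := by
  have hB := hPD.norm_relaxedReflection_sub_sq_le hD hβ0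
    (relaxedReflection β PC x) (relaxedReflection β PC y)
  have hA := hPC.norm_relaxedReflection_sub_sq_le hC hβ0 x y
  nlinarith [mul_nonneg (mul_nonneg hβ0 (sub_nonneg.2 hβ1))
    (sq_nonneg ‖PD (relaxedReflection β PC x) - PD (relaxedReflection β PC y)‖)]

theorem lipschitzWith_aamrOperator (hPC : IsMetricProjection C PC) (hC : Convex ℝ C)
    (hPD : IsMetricProjection D PD) (hD : Convex ℝ D) (hα0 : 0 ≤ α) (hα1 : α ≤ 1)
    (hβ0 : 0 ≤ β) (hβ1 : β ≤ 1) : LipschitzWith 1 (aamrOperator α β PC PD) := by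
  refine LipschitzWith.averagedMap (lipschitzWith_one_of_norm_sub_sq_le fun x y => ?_) hα0 hα1
  have := norm_relaxedReflection_comp_sub_sq_le hPC hC hPD hD hβ0 hβ1 x y
  simp only [Function.comp_apply]
  nlinarith [mul_nonneg (mul_nonneg hβ0 (sub_nonneg.2 hβ1)) (sq_nonneg ‖PC x - PC y‖)]

theorem norm_aamrOperator_sub_sq_add_le (hPC : IsMetricProjection C PC) (hC : Convex ℝ C)
    (hPD : IsMetricProjection D PD) (hD : Convex ℝ D) (hα0 : 0 < α) (hβ0 : 0 ≤ β) (hβ1 : β ≤ 1)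
    {f : H} (hf : IsFixedPt (aamrOperator α β PC PD) f) (x : H) :
    ‖aamrOperator α β PC PD x - f‖ ^ 2 + (1 - α) / α * ‖aamrOperator α β PC PD x - x‖ ^ 2
      + 4 * α * β * (1 - β) * ‖PC x - PC f‖ ^ 2 ≤ ‖x - f‖ ^ 2 := by
  have hNf := (isFixedPt_averagedMap_iff hα0.ne').1 hf
  have hN := norm_relaxedReflection_comp_sub_sq_le hPC hC hPD hD hβ0 hβ1 x f
  rw [show relaxedReflection β PD (relaxedReflection β PC f) = f from hNf] at hN
  have := norm_averagedMap_sub_sq_add (α := α) hNf x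
  rw [Function.comp_apply] at this
  unfold aamrOperator
  nlinarith [mul_le_mul_of_nonneg_left hN hα0.le]

theorem apply_eq_of_isFixedPt_aamrOperator (hPC : IsMetricProjection C PC) (hC : Convex ℝ C)
    (hPD : IsMetricProjection D PD) (hD : Convex ℝ D) (hα0 : 0 < α) (hβ0 : 0 < β) (hβ1 : β < 1)
    {f z : H} (hf : IsFixedPt (aamrOperator α β PC PD) f)
    (hz : IsFixedPt (aamrOperator α β PC PD) z) : PC z = PC f := by
  have h := norm_aamrOperator_sub_sq_add_le hPC hC hPD hD hα0 hβ0.le hβ1.le hf z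
  rw [hz.eq, sub_self, norm_zero] at h
  have hpos : 0 < 4 * α * β * (1 - β) := by have := sub_pos.2 hβ1; positivity
  have : ‖PC z - PC f‖ ^ 2 ≤ 0 := by nlinarith
  exact sub_eq_zero.1 (norm_eq_zero.1 ((sq_nonpos_iff _).1 this))

theorem exists_isFixedPt_aamrOperator (hPC : IsMetricProjection C PC) (hC : Convex ℝ C)
    (hPD : IsMetricProjection D PD) (hD : Convex ℝ D) (hβ1 : β ≤ 1) {s : H}
    (hs : -s ∈ normalCone C s + normalCone D s) :
    ∃ f, IsFixedPt (aamrOperator α β PC PD) f ∧ PC f = s := by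
  obtain ⟨u, ⟨hsC, hu⟩, v, ⟨hsD, hv⟩, huv⟩ := hs
  have hβ : 0 ≤ 2 - 2 * β := by linarith
  have hPCf : PC (s + (2 - 2 * β) • u) = s := by
    refine hPC.apply_eq hC hsC fun c hc => ?_
    rw [add_sub_cancel_left, real_inner_smul_left]
    exact mul_nonpos_of_nonneg_of_nonpos hβ (hu c hc)
  have hPDf : PD (relaxedReflection β PC (s + (2 - 2 * β) • u)) = s := by
    refine hPD.apply_eq hD hsD fun c hc => ?_
    have : relaxedReflection β PC (s + (2 - 2 * β) • u) - s = (2 - 2 * β) • v := by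
      rw [relaxedReflection, hPCf, eq_sub_of_add_eq' huv]; module
    rw [this, real_inner_smul_left]
    exact mul_nonpos_of_nonneg_of_nonpos hβ (hv c hc)
  refine ⟨s + (2 - 2 * β) • u, IsFixedPt.averagedMap ?_, hPCf⟩
  rw [IsFixedPt, Function.comp_apply, relaxedReflection, hPDf, relaxedReflection, hPCf]
  module

end AAMR

section Weak

variable {H : Type*} [NormedAddCommGroup H] [InnerProductSpace ℝ H]

def WeakTendsto (u : ℕ → H) (z : H) : Prop :=
  ∀ y, Tendsto (fun n => ⟪u n, y⟫) atTop (𝓝 ⟪z, y⟫)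

/-- Sequential Banach–Alaoglu in the separable closed span of the sequence, then Riesz. -/
theorem exists_strictMono_weakTendsto [CompleteSpace H] {u : ℕ → H} {M : ℝ}
    (hu : ∀ n, ‖u n‖ ≤ M) : ∃ z, ∃ φ : ℕ → ℕ, StrictMono φ ∧ WeakTendsto (u ∘ φ) z := by
  set S := (Submodule.span ℝ (Set.range u)).topologicalClosure
  have : CompleteSpace S := (Submodule.isClosed_topologicalClosure _).completeSpace_coe
  have : TopologicalSpace.SeparableSpace S := by
    have := ((Set.countable_range u).isSeparable.span (R := ℝ)).closure
    rw [← Submodule.topologicalClosure_coe] at this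
    exact this.separableSpace
  have huS : ∀ n, u n ∈ S := fun n =>
    Submodule.le_topologicalClosure _ (Submodule.subset_span ⟨n, rfl⟩)
  let ℓ : ℕ → WeakDual ℝ S := fun n =>
    StrongDual.toWeakDual (InnerProductSpace.toDual ℝ S ⟨u n, huS n⟩)
  obtain ⟨a, -, φ, hφ, hlim⟩ := WeakDual.isSeqCompact_closedBall ℝ S 0 M (x := ℓ)
    fun n => by simpa [ℓ] using hu n
  refine ⟨(InnerProductSpace.toDual ℝ S).symm (WeakDual.toStrongDual a), φ, hφ, fun y => ?_⟩
  have := ((WeakDual.eval_continuous (S.orthogonalProjectionOnto y)).tendsto a).comp hlim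
  convert this using 1
  · ext n
    exact (S.inner_orthogonalProjectionOnto_eq_of_mem_left ⟨u (φ n), huS _⟩ y).symm
  · exact congrArg 𝓝 ((S.inner_orthogonalProjectionOnto_eq_of_mem_left _ y).symm.trans
      InnerProductSpace.toDual_symm_apply)

theorem LipschitzWith.isFixedPt_of_weakTendsto {T : H → H} (hT : LipschitzWith 1 T)
    {u : ℕ → H} {z : H} {M : ℝ} (hu : ∀ n, ‖u n‖ ≤ M) (hz : WeakTendsto u z)
    (hreg : Tendsto (fun n => T (u n) - u n) atTop (𝓝 0)) : IsFixedPt T z := by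
  set ε := fun n => ‖T (u n) - u n‖
  have hbound : ∀ n, ‖T z - z‖ ^ 2 ≤ ε n * (ε n + 2 * (M + ‖z‖)) + 2 * ⟪u n - z, T z - z⟫ := by
    intro n
    have hid : ‖u n - T z‖ ^ 2 = ‖u n - z‖ ^ 2 - 2 * ⟪u n - z, T z - z⟫ + ‖T z - z‖ ^ 2 := by
      rw [← norm_sub_sq_real, sub_sub_sub_cancel_right]
    have htri : ‖u n - T z‖ ≤ ε n + ‖u n - z‖ := by
      calc ‖u n - T z‖ ≤ ‖u n - T (u n)‖ + ‖T (u n) - T z‖ :=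
            norm_sub_le_norm_sub_add_norm_sub _ _ _
        _ ≤ ε n + ‖u n - z‖ := by
          gcongr
          · exact (norm_sub_rev _ _).le
          · simpa using hT.norm_sub_le (u n) z
    have hM : ‖u n - z‖ ≤ M + ‖z‖ := (_root_.norm_sub_le _ _).trans (by gcongr; exact hu n)
    have hε : 0 ≤ ε n := norm_nonneg _
    nlinarith [pow_le_pow_left₀ (norm_nonneg _) htri 2, mul_le_mul_of_nonneg_left hM hε]
  have hlim : Tendsto (fun n => ε n * (ε n + 2 * (M + ‖z‖)) + 2 * ⟪u n - z, T z - z⟫) atTop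
      (𝓝 0) := by
    have hε : Tendsto ε atTop (𝓝 0) := by simpa using hreg.norm
    have hinner : Tendsto (fun n => ⟪u n - z, T z - z⟫) atTop (𝓝 0) := by
      simpa [inner_sub_left] using (hz (T z - z)).sub_const ⟪z, T z - z⟫
    simpa using (hε.mul (hε.add_const _)).add (hinner.const_mul 2)
  have : ‖T z - z‖ ^ 2 ≤ 0 := ge_of_tendsto' hlim hbound
  exact sub_eq_zero.1 (norm_eq_zero.1 ((sq_nonpos_iff _).1 this))

/-- Opial: `⟪x n, z₁ - z₂⟫` converges, and its limit is both `⟪z₁, z₁ - z₂⟫` and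
`⟪z₂, z₁ - z₂⟫`. -/
theorem eq_of_weakTendsto_of_tendsto_norm_sub {x : ℕ → H} {z₁ z₂ : H} {L₁ L₂ : ℝ}
    (h₁ : Tendsto (fun n => ‖x n - z₁‖) atTop (𝓝 L₁))
    (h₂ : Tendsto (fun n => ‖x n - z₂‖) atTop (𝓝 L₂)) {φ ψ : ℕ → ℕ}
    (hφ : Tendsto φ atTop atTop) (hψ : Tendsto ψ atTop atTop)
    (hz₁ : WeakTendsto (x ∘ φ) z₁) (hz₂ : WeakTendsto (x ∘ ψ) z₂) : z₁ = z₂ := by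
  set ℓ := (L₂ ^ 2 - L₁ ^ 2 + ‖z₁‖ ^ 2 - ‖z₂‖ ^ 2) / 2
  have hid : ∀ n,
      ⟪x n, z₁ - z₂⟫ = (‖x n - z₂‖ ^ 2 - ‖x n - z₁‖ ^ 2 + ‖z₁‖ ^ 2 - ‖z₂‖ ^ 2) / 2 := by
    intro n
    rw [inner_sub_right, norm_sub_sq_real, norm_sub_sq_real]
    ring
  have hlim : Tendsto (fun n => ⟪x n, z₁ - z₂⟫) atTop (𝓝 ℓ) := by
    simp only [hid]
    exact ((((h₂.pow 2).sub (h₁.pow 2)).add_const _).sub_const _).div_const 2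
  have e₁ : ⟪z₁, z₁ - z₂⟫ = ℓ := tendsto_nhds_unique (hz₁ _) (hlim.comp hφ)
  have e₂ : ⟪z₂, z₁ - z₂⟫ = ℓ := tendsto_nhds_unique (hz₂ _) (hlim.comp hψ)
  have : ⟪z₁ - z₂, z₁ - z₂⟫ = 0 := by rw [inner_sub_left, e₁, e₂, sub_self]
  exact sub_eq_zero.1 (inner_self_eq_zero.1 this)

theorem norm_le_of_forall_norm_sub_le {E : Type*} [SeminormedAddCommGroup E] {x : ℕ → E} {f : E}
    (h : ∀ n, ‖x (n + 1) - f‖ ≤ ‖x n - f‖) (n : ℕ) : ‖x n‖ ≤ ‖x 0 - f‖ + ‖f‖ :=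
  (norm_le_norm_sub_add _ f).trans <| by
    gcongr
    exact antitone_nat_of_succ_le (f := fun n => ‖x n - f‖) h (Nat.zero_le n)

theorem exists_weakTendsto_of_fejer [CompleteSpace H] {x : ℕ → H} {F : Set H} {f : H} (hf : f ∈ F)
    (hfejer : ∀ z ∈ F, ∀ n, ‖x (n + 1) - z‖ ≤ ‖x n - z‖)
    (hcluster : ∀ z (φ : ℕ → ℕ), Tendsto φ atTop atTop → WeakTendsto (x ∘ φ) z → z ∈ F) :
    ∃ z ∈ F, WeakTendsto x z := by
  have hbdd := norm_le_of_forall_norm_sub_le (hfejer f hf)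
  have hconv : ∀ z ∈ F, ∃ L, Tendsto (fun n => ‖x n - z‖) atTop (𝓝 L) := fun z hz =>
    ⟨_, tendsto_atTop_ciInf (antitone_nat_of_succ_le (hfejer z hz)) ⟨0, by
      rintro _ ⟨n, rfl⟩; positivity⟩⟩
  obtain ⟨z, φ, hφ, hz⟩ := exists_strictMono_weakTendsto hbdd
  have hzF := hcluster z φ hφ.tendsto_atTop hz
  refine ⟨z, hzF, fun y => tendsto_of_subseq_tendsto fun ns hns => ?_⟩
  obtain ⟨z', ψ, hψ, hz'⟩ := exists_strictMono_weakTendsto fun n => hbdd (ns n)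
  have hnsψ : Tendsto (ns ∘ ψ) atTop atTop := hns.comp hψ.tendsto_atTop
  have hz'F := hcluster z' (ns ∘ ψ) hnsψ hz'
  obtain ⟨L, hL⟩ := hconv z hzF
  obtain ⟨L', hL'⟩ := hconv z' hz'F
  obtain rfl := eq_of_weakTendsto_of_tendsto_norm_sub hL' hL hnsψ hφ.tendsto_atTop hz' hz
  exact ⟨ψ, hz' y⟩

theorem LipschitzWith.exists_isFixedPt_weakTendsto [CompleteSpace H] {T : H → H}
    (hT : LipschitzWith 1 T) {f : H} (hf : IsFixedPt T f) {x : ℕ → H}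
    (hx : ∀ n, x (n + 1) = T (x n)) (hreg : Tendsto (fun n => x (n + 1) - x n) atTop (𝓝 0)) :
    ∃ z, IsFixedPt T z ∧ WeakTendsto x z := by
  have hfejer : ∀ z, IsFixedPt T z → ∀ n, ‖x (n + 1) - z‖ ≤ ‖x n - z‖ := fun z hz n => by
    simpa [hx, hz.eq] using hT.norm_sub_le (x n) z
  refine exists_weakTendsto_of_fejer (F := {z | IsFixedPt T z}) hf hfejer fun z φ hφ hz => ?_
  refine hT.isFixedPt_of_weakTendsto (fun n => norm_le_of_forall_norm_sub_le (hfejer f hf) _) hz ?_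
  simpa [Function.comp_def, hx] using hreg.comp hφ

end Weak

theorem tendsto_atTop_zero_of_add_le {a b : ℕ → ℝ} (ha : ∀ n, 0 ≤ a n) (hb : ∀ n, 0 ≤ b n)
    (h : ∀ n, a (n + 1) + b n ≤ a n) : Tendsto b atTop (𝓝 0) := by
  have hsum : ∀ n, ∑ i ∈ Finset.range n, b i ≤ a 0 - a n := by
    intro n
    induction n with
    | zero => simp
    | succ n ih => rw [Finset.sum_range_succ]; linarith [h n]
  exact (summable_of_sum_range_le hb fun n =>
    (hsum n).trans (sub_le_self _ (ha n))).tendsto_atTop_zero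

theorem tendsto_zero_of_mul_norm_sq_le {E : Type*} [SeminormedAddCommGroup E] {v : ℕ → E}
    {b : ℕ → ℝ} {c : ℝ} (hc : 0 < c) (hb : Tendsto b atTop (𝓝 0))
    (h : ∀ n, c * ‖v n‖ ^ 2 ≤ b n) : Tendsto v atTop (𝓝 0) := by
  refine squeeze_zero_norm (fun n => Real.le_sqrt_of_sq_le ?_)
    (by simpa using (hb.div_const c).sqrt)
  rw [le_div_iff₀ hc, mul_comm]
  exact h n

section AAMRIteration

variable {H : Type*} [NormedAddCommGroup H] [InnerProductSpace ℝ H] {α β : ℝ}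
  {C D : Set H} {PC PD : H → H}

theorem tendsto_aamrOperator_iterate (hPC : IsMetricProjection C PC) (hC : Convex ℝ C)
    (hPD : IsMetricProjection D PD) (hD : Convex ℝ D) (hα0 : 0 < α) (hα1 : α < 1)
    (hβ0 : 0 < β) (hβ1 : β < 1) {f : H} (hf : IsFixedPt (aamrOperator α β PC PD) f)
    {x : ℕ → H} (hx : ∀ n, x (n + 1) = aamrOperator α β PC PD (x n)) :
    Tendsto (fun n => x (n + 1) - x n) atTop (𝓝 0) ∧
      Tendsto (fun n => PC (x n)) atTop (𝓝 (PC f)) := by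
  set c₁ := (1 - α) / α
  set c₂ := 4 * α * β * (1 - β)
  have hc₁ : 0 < c₁ := div_pos (sub_pos.2 hα1) hα0
  have hc₂ : 0 < c₂ := by have := sub_pos.2 hβ1; positivity
  have hb := tendsto_atTop_zero_of_add_le (a := fun n => ‖x n - f‖ ^ 2)
    (b := fun n => c₁ * ‖x (n + 1) - x n‖ ^ 2 + c₂ * ‖PC (x n) - PC f‖ ^ 2)
    (fun n => by positivity) (fun n => by positivity) fun n => by
      have := norm_aamrOperator_sub_sq_add_le hPC hC hPD hD hα0 hβ0.le hβ1.le hf (x n)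
      rw [← hx] at this
      linarith
  constructor
  · exact tendsto_zero_of_mul_norm_sq_le hc₁ hb fun n => le_add_of_nonneg_right (by positivity)
  · exact tendsto_sub_nhds_zero_iff.1 <|
      tendsto_zero_of_mul_norm_sq_le hc₂ hb fun n => le_add_of_nonneg_left (by positivity)

end AAMRIteration

theorem stmt_14_general {H : Type*} [NormedAddCommGroup H] [InnerProductSpace ℝ H] [CompleteSpace H]
    (A B : Set H) (hAv : Convex ℝ A) (hBv : Convex ℝ B)
    (α β : ℝ) (hα : α ∈ Set.Ioo (0 : ℝ) 1) (hβ : β ∈ Set.Ioo (0 : ℝ) 1)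
    (q : H)
    (PA PAq PBq : H → H)
    (hPA : ∀ x, PA x ∈ A ∧ ∀ c ∈ A, ‖x - PA x‖ ≤ ‖x - c‖)
    (hPAq : ∀ x, PAq x ∈ A - {q} ∧ ∀ c ∈ A - {q}, ‖x - PAq x‖ ≤ ‖x - c‖)
    (hPBq : ∀ x, PBq x ∈ B - {q} ∧ ∀ c ∈ B - {q}, ‖x - PBq x‖ ≤ ‖x - c‖)
    (p : H)
    (hCQ : q - p ∈ normalCone A p + normalCone B p)
    (T : H → H)
    (hT : ∀ x, T x =
      (1 - α) • x + α • ((2 * β) • PBq ((2 * β) • PAq x - x) - ((2 * β) • PAq x - x)))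
    (x : ℕ → H) (hrec : ∀ n, x (n + 1) = T (x n)) :
    ∃ xs, T xs = xs ∧ PA (q + xs) = p ∧
      (∀ y, Tendsto (fun n => ⟪x n, y⟫) atTop (nhds ⟪xs, y⟫)) ∧
      Tendsto (fun n => x (n + 1) - x n) atTop (nhds 0) ∧
      Tendsto (fun n => PA (q + x n)) atTop (nhds p) := by
  obtain ⟨hα0, hα1⟩ := hα
  obtain ⟨hβ0, hβ1⟩ := hβ
  have hAq : Convex ℝ (A - {q}) := hAv.sub (convex_singleton q)
  have hBq : Convex ℝ (B - {q}) := hBv.sub (convex_singleton q)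
  obtain rfl : T = aamrOperator α β PAq PBq := funext hT
  obtain ⟨f, hf, hPf⟩ := exists_isFixedPt_aamrOperator (α := α) (s := p - q) hPAq hAq hPBq hBq
    hβ1.le (by rwa [normalCone_sub_singleton, normalCone_sub_singleton, neg_sub])
  obtain ⟨hincr, hshadow⟩ := tendsto_aamrOperator_iterate hPAq hAq hPBq hBq hα0 hα1 hβ0 hβ1 hf hrec
  obtain ⟨z, hz, hzx⟩ := (lipschitzWith_aamrOperator hPAq hAq hPBq hBq hα0.le hα1.le hβ0.le
    hβ1.le).exists_isFixedPt_weakTendsto hf hrec hincr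
  have hPAz := apply_eq_of_isFixedPt_aamrOperator hPAq hAq hPBq hBq hα0 hβ0 hβ1 hf hz
  simp_rw [IsMetricProjection.apply_add_eq hPA hPAq hAv]
  refine ⟨z, hz, by rw [hPAz, hPf, add_sub_cancel], hzx, hincr, ?_⟩
  simpa [hPf] using hshadow.const_add q

/-- Under the constraint qualification
`q − P_{A∩B}(q) ∈ N_A(P_{A∩B}(q)) + N_B(P_{A∩B}(q))`, the AAMR iteration
`x_{n+1} = T_{A−q,B−q,α,β}(x_n)` converges weakly to a fixed point `x*` with
`P_A(q + x*) = P_{A∩B}(q)`, the differences `x_{n+1} − x_n` converge strongly to `0`,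
and the shadow sequence `P_A(q + x_n)` converges strongly to `P_{A∩B}(q)`. -/
theorem stmt_14 {H : Type*} [NormedAddCommGroup H] [InnerProductSpace ℝ H] [CompleteSpace H]
    (A B : Set H) (hAne : A.Nonempty) (hAc : IsClosed A) (hAv : Convex ℝ A)
    (hBne : B.Nonempty) (hBc : IsClosed B) (hBv : Convex ℝ B)
    (hAB : (A ∩ B).Nonempty)
    (α β : ℝ) (hα : α ∈ Set.Ioo (0 : ℝ) 1) (hβ : β ∈ Set.Ioo (0 : ℝ) 1)
    (q : H)
    (PA PAq PBq : H → H)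
    (hPA : ∀ x, PA x ∈ A ∧ ∀ c ∈ A, ‖x - PA x‖ ≤ ‖x - c‖)
    (hPAq : ∀ x, PAq x ∈ A - {q} ∧ ∀ c ∈ A - {q}, ‖x - PAq x‖ ≤ ‖x - c‖)
    (hPBq : ∀ x, PBq x ∈ B - {q} ∧ ∀ c ∈ B - {q}, ‖x - PBq x‖ ≤ ‖x - c‖)
    (p : H) (hp : p ∈ A ∩ B ∧ ∀ y ∈ A ∩ B, ‖q - p‖ ≤ ‖q - y‖)
    (hCQ : q - p ∈ normalCone A p + normalCone B p)
    (T : H → H)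
    (hT : ∀ x, T x =
      (1 - α) • x + α • ((2 * β) • PBq ((2 * β) • PAq x - x) - ((2 * β) • PAq x - x)))
    (x : ℕ → H) (hrec : ∀ n, x (n + 1) = T (x n)) :
    ∃ xs, T xs = xs ∧ PA (q + xs) = p ∧
      (∀ y, Tendsto (fun n => ⟪x n, y⟫) atTop (nhds ⟪xs, y⟫)) ∧
      Tendsto (fun n => x (n + 1) - x n) atTop (nhds 0) ∧
      Tendsto (fun n => PA (q + x n)) atTop (nhds p) :=
  stmt_14_general A B hAv hBv α β hα hβ q PA PAq PBq hPA hPAq hPBq p hCQ T hT x hrec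
end

section
/- Let H be a real Hilbert space and let A, B ⊆ H be nonempty closed convex sets with A ∩ B ≠ ∅. Then the following are equivalent: (i) {A, B} has the strong CHIP, i.e., N_{A∩B}(x) = N_A(x) + N_B(x) for every x ∈ A ∩ B; (ii) for every q ∈ H, q − P_{A∩B}(q) ∈ N_A(P_{A∩B}(q)) + N_B(P_{A∩B}(q)). -/
/-!
By the variational characterisation of the metric projection onto the convex set `K = A ∩ B`,
`q - P_K q ∈ N_K(P_K q)` for every `q`, and conversely `u ∈ N_K(x)` forces `P_K (x + u) = x`.
Hence (ii) is (i) evaluated at the points `x = P_K q`, and every `u ∈ N_K(x)` arises this way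
with `q = x + u`. The inclusion `N_A(x) + N_B(x) ⊆ N_{A∩B}(x)` holds for any pair of sets.
-/

open RealInnerProductSpace Pointwise

section NormalCone

variable {H : Type*} [NormedAddCommGroup H] [InnerProductSpace ℝ H]

theorem normalCone_add_subset_inter (A B : Set H) (x : H) :
    normalCone A x + normalCone B x ⊆ normalCone (A ∩ B) x := by
  rintro _ ⟨a, ⟨hxA, ha⟩, b, ⟨hxB, hb⟩, rfl⟩
  refine ⟨⟨hxA, hxB⟩, fun c hc => ?_⟩
  rw [inner_add_left]
  linarith [ha c hc.1, hb c hc.2]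

theorem sub_mem_normalCone_of_forall_norm_le {K : Set H} (hK : Convex ℝ K) {q p : H}
    (hp : p ∈ K) (hmin : ∀ c ∈ K, ‖q - p‖ ≤ ‖q - c‖) : q - p ∈ normalCone K p := by
  have : Nonempty K := ⟨⟨p, hp⟩⟩
  have hinf : ‖q - p‖ = ⨅ c : K, ‖q - c‖ :=
    le_antisymm (le_ciInf fun c => hmin c c.2)
      (ciInf_le (f := fun c : K => ‖q - c‖) ⟨0, Set.forall_mem_range.mpr fun _ => norm_nonneg _⟩ ⟨p, hp⟩)
  exact ⟨hp, (norm_eq_iInf_iff_real_inner_le_zero hK hp).mp hinf⟩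

theorem eq_of_sub_mem_normalCone {K : Set H} {q p p' : H}
    (hp : q - p ∈ normalCone K p) (hp' : q - p' ∈ normalCone K p') : p = p' := by
  have h₁ := hp.2 p' hp'.1
  have h₂ := hp'.2 p hp.1
  have hsum : ⟪p' - p, p' - p⟫ ≤ 0 := by
    have : ⟪q - p, p' - p⟫ + ⟪q - p', p - p'⟫ = ⟪p' - p, p' - p⟫ := by
      rw [← neg_sub p' p, inner_neg_right, ← sub_eq_add_neg, ← inner_sub_left]
      congr 1
      abel
    linarith
  exact (sub_eq_zero.mp (real_inner_self_nonpos.mp hsum)).symm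

end NormalCone

theorem stmt_17_general {H : Type*} [NormedAddCommGroup H] [InnerProductSpace ℝ H]
    (A B : Set H) (hAv : Convex ℝ A)
    (hBv : Convex ℝ B)
    (PAB : H → H)
    (hPAB : ∀ x, PAB x ∈ A ∩ B ∧ ∀ c ∈ A ∩ B, ‖x - PAB x‖ ≤ ‖x - c‖) :
    (∀ x ∈ A ∩ B, normalCone (A ∩ B) x = normalCone A x + normalCone B x) ↔
      (∀ q : H, q - PAB q ∈ normalCone A (PAB q) + normalCone B (PAB q)) := by
  have hproj (q : H) : q - PAB q ∈ normalCone (A ∩ B) (PAB q) :=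
    sub_mem_normalCone_of_forall_norm_le (hAv.inter hBv) (hPAB q).1 (hPAB q).2
  constructor
  · intro hCHIP q
    rw [← hCHIP _ (hPAB q).1]
    exact hproj q
  · intro hsum x hx
    refine subset_antisymm (fun u hu => ?_) (normalCone_add_subset_inter A B x)
    have hx' : PAB (x + u) = x :=
      eq_of_sub_mem_normalCone (hproj (x + u)) (by simpa using hu)
    simpa [hx'] using hsum (x + u)

/-- For nonempty closed convex `A, B` with `A ∩ B ≠ ∅`, the pair `{A, B}`
has the strong CHIP if and only if `q − P_{A∩B}(q) ∈ N_A(P_{A∩B}(q)) + N_B(P_{A∩B}(q))`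
for every `q ∈ H`. -/
theorem stmt_17 {H : Type*} [NormedAddCommGroup H] [InnerProductSpace ℝ H] [CompleteSpace H]
    (A B : Set H) (hAne : A.Nonempty) (hAc : IsClosed A) (hAv : Convex ℝ A)
    (hBne : B.Nonempty) (hBc : IsClosed B) (hBv : Convex ℝ B)
    (hAB : (A ∩ B).Nonempty)
    (PAB : H → H)
    (hPAB : ∀ x, PAB x ∈ A ∩ B ∧ ∀ c ∈ A ∩ B, ‖x - PAB x‖ ≤ ‖x - c‖) :
    (∀ x ∈ A ∩ B, normalCone (A ∩ B) x = normalCone A x + normalCone B x) ↔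
      (∀ q : H, q - PAB q ∈ normalCone A (PAB q) + normalCone B (PAB q)) :=
  stmt_17_general A B hAv hBv PAB hPAB
end
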